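/- arXiv:0711.1622 — 6 statements merged into one kernel-verified Lean document; each statement's English description precedes it below -/
import Mathlib

section
/- Let q be a prime power with q ≡ 3 (mod 4), let 2^(m-2) be the largest power of 2 dividing q+1, and let ξ be a primitive 2^(m-1)-th root of unity in F_{q^2} with a = ξ + ξ^q. Then the matrices x = [[0,1],[1,a]] and t = [[1,a],[0,-1]] in GL_2(F_q) satisfy x^{2^{m-1}} = 1, t^2 = 1, and t x t = x^{2^{m-2}-1}, and x has order exactly 2^{m-1}. -/
open Matrix Polynomial

/-!
As `2 ^ (m - 2)` exactly divides `q + 1` and `ξ ^ 2 ^ (m - 2) = -1`, we get `ξ ^ (q + 1) = -1`,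
so `a = ξ - ξ⁻¹`. The characteristic polynomial `T² - aT - 1` of `x` then has the two roots
`ξ ≠ -ξ⁻¹` in `K`, both with `2 ^ (m - 2)`-th power `-1`; hence it divides `T ^ 2 ^ (m - 2) + 1`
and Cayley–Hamilton gives `x ^ 2 ^ (m - 2) = -1`. Everything else follows from this: `t * x * t`
is `-x⁻¹` by direct computation, and `-1 ≠ 1` because `q` is odd.
-/

theorem pow_eq_of_mul_eq_neg_one {R : Type*} [Ring R] {x y : R} {n : ℕ}
    (hx : x ^ (n + 1) = -1) (hxy : x * y = -1) : x ^ n = y :=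
  calc x ^ n = -(x ^ n * (x * y)) := by rw [hxy, mul_neg_one, neg_neg]
    _ = -(x ^ (n + 1) * y) := by rw [pow_succ, mul_assoc]
    _ = y := by rw [hx, neg_one_mul, neg_neg]

theorem pow_two_pow_eq_neg_one_of_orderOf {R : Type*} [CommRing R] [NoZeroDivisors R] {ξ : R}
    {k : ℕ} (hξ : orderOf ξ = 2 ^ (k + 1)) : ξ ^ 2 ^ k = -1 := by
  have h := (IsPrimitiveRoot.iff_orderOf.mpr hξ).pow_of_dvd (pow_ne_zero k two_ne_zero)
    (pow_dvd_pow 2 k.le_succ)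
  rw [pow_succ, Nat.mul_div_cancel_left _ (by positivity)] at h
  exact h.eq_neg_one_of_two_right

theorem pow_eq_neg_inv_of_two_pow_dvd {K : Type*} [Field K] {ξ : K} {k q : ℕ}
    (hξ : ξ ^ 2 ^ k = -1) (hdvd : 2 ^ k ∣ q + 1) (hndvd : ¬ 2 ^ (k + 1) ∣ q + 1) :
    ξ ^ q = -ξ⁻¹ := by
  obtain ⟨c, hc⟩ := hdvd
  have hc_odd : Odd c := Nat.not_even_iff_odd.mp fun ⟨d, hd⟩ ↦
    hndvd ⟨d, by rw [hc, hd, pow_succ]; ring⟩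
  have hξ0 : ξ ≠ 0 := by rintro rfl; simp at hξ
  have h : ξ ^ q * ξ = -1 := by rw [← pow_succ, hc, pow_mul, hξ, hc_odd.neg_one_pow]
  rw [(eq_mul_inv_iff_mul_eq₀ hξ0).mpr h, neg_one_mul]

theorem neg_inv_pow_two_pow {K : Type*} [Field K] {ξ : K} {k : ℕ} (hk : k ≠ 0)
    (hξ : ξ ^ 2 ^ k = -1) : (-ξ⁻¹) ^ 2 ^ k = -1 := by
  rw [(Nat.even_pow.mpr ⟨even_two, hk⟩).neg_pow, inv_pow, hξ, inv_neg, inv_one]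

theorem ne_neg_inv_of_orderOf {K : Type*} [Field K] {ξ : K} {k : ℕ}
    (hξ : orderOf ξ = 2 ^ (k + 1)) (hk : 2 ≤ k) : ξ ≠ -ξ⁻¹ := by
  intro h
  have hξ0 : ξ ≠ 0 := by rintro rfl; simp at hξ; exact absurd hξ.symm (by positivity)
  have hsq : ξ ^ 2 = -1 := by rw [sq]; nth_rw 2 [h]; rw [mul_neg, mul_inv_cancel₀ hξ0]
  have h4 : ξ ^ 2 ^ 2 = 1 := by rw [show 2 ^ 2 = 2 * 2 from rfl, pow_mul, hsq, neg_one_sq]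
  have := (Nat.pow_dvd_pow_iff_le_right one_lt_two).mp (hξ ▸ orderOf_dvd_of_pow_eq_one h4)
  omega

theorem Matrix.charpoly_map_eq_of_trace_of_det {R S : Type*} [CommRing R] [Nontrivial R]
    [CommRing S] [Algebra R S] (M : Matrix (Fin 2) (Fin 2) R) {α β : S}
    (htr : algebraMap R S M.trace = α + β) (hdet : algebraMap R S M.det = α * β) :
    M.charpoly.map (algebraMap R S) = (X - C α) * (X - C β) := by
  simp only [charpoly_fin_two, Polynomial.map_add, Polynomial.map_sub, Polynomial.map_mul,
    Polynomial.map_pow, map_X, map_C, htr, hdet, C_add, C_mul]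
  ring

theorem Matrix.pow_eq_neg_one_of_charpoly_map_eq {n F K : Type*} [Fintype n] [DecidableEq n]
    [Field F] [Field K] [Algebra F K] (M : Matrix n n F) {α β : K} (hαβ : α ≠ β)
    (hM : M.charpoly.map (algebraMap F K) = (X - C α) * (X - C β)) {N : ℕ}
    (hα : α ^ N = -1) (hβ : β ^ N = -1) : M ^ N = -1 := by
  have hdvd : M.charpoly ∣ X ^ N + 1 := by
    rw [← map_dvd_map' (algebraMap F K), hM]
    refine (isCoprime_X_sub_C_of_isUnit_sub (sub_ne_zero.mpr hαβ).isUnit).mul_dvd ?_ ?_ <;>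
      simp [dvd_iff_isRoot, hα, hβ]
  have h := aeval_eq_zero_of_dvd_aeval_eq_zero hdvd M.aeval_self_charpoly
  simpa [eq_neg_iff_add_eq_zero] using h

theorem semidihedral_generators_of_GL2_general
    (q m : ℕ) (hq3 : q % 4 = 3)
    (hdvd : 2 ^ (m - 2) ∣ q + 1) (hndvd : ¬ 2 ^ (m - 1) ∣ q + 1)
    (F K : Type) [Field F] [Field K] [Fintype F] [Algebra F K]
    (hF : Fintype.card F = q)
    (ξ : K) (hξ : orderOf ξ = 2 ^ (m - 1))
    (a : F) (ha : algebraMap F K a = ξ + ξ ^ q) :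
    let x : Matrix (Fin 2) (Fin 2) F := !![0, 1; 1, a]
    let t : Matrix (Fin 2) (Fin 2) F := !![1, a; 0, -1]
    x ^ (2 ^ (m - 1)) = 1 ∧ t ^ 2 = 1 ∧
      t * x * t = x ^ (2 ^ (m - 2) - 1) ∧ orderOf x = 2 ^ (m - 1) := by
  intro x t
  have hm : 2 ≤ m := by by_contra!; interval_cases m <;> simp at hndvd
  obtain ⟨k, rfl⟩ := Nat.exists_eq_add_of_le' hm
  simp only [Nat.add_sub_cancel, show k + 2 - 1 = k + 1 by omega] at *
  have hk : 2 ≤ k := by by_contra!; interval_cases k <;> norm_num at hndvd <;> omega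
  have hξk := pow_two_pow_eq_neg_one_of_orderOf hξ
  have hξ0 : ξ ≠ 0 := by rintro rfl; simp at hξk
  have hxk : x ^ 2 ^ k = -1 := by
    refine x.pow_eq_neg_one_of_charpoly_map_eq (ne_neg_inv_of_orderOf hξ hk)
      (x.charpoly_map_eq_of_trace_of_det ?_ ?_) hξk (neg_inv_pow_two_pow (by omega) hξk)
    · simp [x, trace_fin_two, ha, pow_eq_neg_inv_of_two_pow_dvd hξk hdvd hndvd]
    · simp [x, det_fin_two, hξ0]
  have hx1 : x ^ 2 ^ (k + 1) = 1 := by rw [pow_succ, pow_mul, hxk, neg_one_sq]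
  have hneg_one : (-1 : Matrix (Fin 2) (Fin 2) F) ≠ 1 := by
    have hchar : ringChar F ≠ 2 := by rw [Ne, FiniteField.even_card_iff_char_two]; omega
    intro h
    exact Ring.neg_one_ne_one_of_char_ne_two hchar (by simpa using congrFun (congrFun h 0) 0)
  refine ⟨hx1, ?_, (pow_eq_of_mul_eq_neg_one ?_ ?_).symm,
    orderOf_eq_prime_pow (hxk ▸ hneg_one) hx1⟩
  · ext i j; fin_cases i <;> fin_cases j <;> simp [t, sq]
  · rw [Nat.sub_add_cancel Nat.one_le_two_pow, hxk]
  · ext i j; fin_cases i <;> fin_cases j <;> simp [x, t]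

/-- For `q ≡ 3 (mod 4)` a prime power, `2^(m-2)` the exact power of `2` in `q+1`,
`ξ` a primitive `2^(m-1)`-th root of unity in `F_{q^2}` and `a = ξ + ξ^q` (an element of `F_q`),
the matrices `x = [[0,1],[1,a]]`, `t = [[1,a],[0,-1]]` satisfy `x^(2^(m-1)) = 1`, `t^2 = 1`,
`t*x*t = x^(2^(m-2)-1)`, and `x` has order exactly `2^(m-1)`. -/
theorem semidihedral_generators_of_GL2
    (q m : ℕ) (hq : IsPrimePow q) (hq3 : q % 4 = 3)
    (hdvd : 2 ^ (m - 2) ∣ q + 1) (hndvd : ¬ 2 ^ (m - 1) ∣ q + 1)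
    (F K : Type) [Field F] [Field K] [Fintype F] [Fintype K] [Algebra F K]
    (hF : Fintype.card F = q) (hK : Fintype.card K = q ^ 2)
    (ξ : K) (hξ : orderOf ξ = 2 ^ (m - 1))
    (a : F) (ha : algebraMap F K a = ξ + ξ ^ q) :
    let x : Matrix (Fin 2) (Fin 2) F := !![0, 1; 1, a]
    let t : Matrix (Fin 2) (Fin 2) F := !![1, a; 0, -1]
    x ^ (2 ^ (m - 1)) = 1 ∧ t ^ 2 = 1 ∧
      t * x * t = x ^ (2 ^ (m - 2) - 1) ∧ orderOf x = 2 ^ (m - 1) :=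
  semidihedral_generators_of_GL2_general q m hq3 hdvd hndvd F K hF ξ hξ a ha
end

section
/- Let q be a prime power with q ≡ 1 (mod 4), and let 2^m be the largest power of 2 dividing q-1. Then the subgroup of GL_2(F_q) generated by diag(η,1), diag(1,η), and the permutation matrix [[0,1],[1,0]], where η is a primitive 2^m-th root of unity in F_q, is a Sylow 2-subgroup of GL_2(F_q) isomorphic to the wreath product C_{2^m} ≀ C_2. -/
open Matrix

/-- The automorphism of `A × A` swapping the two factors. -/
def swapMulAut (A : Type) [CommGroup A] : MulAut (A × A) :=
  { Equiv.prodComm A A with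
    map_mul' := fun _ _ => rfl }

/-- The homomorphism `C₂ →* MulAut (A × A)` sending the generator to the swap. -/
def swapHom (A : Type) [CommGroup A] : Multiplicative (ZMod 2) →* MulAut (A × A) where
  toFun g := if g.toAdd = 0 then 1 else swapMulAut A
  map_one' := by simp
  map_mul' := by
    intro a b
    fin_cases a <;> fin_cases b <;>
      simp [swapMulAut] <;> exact MulEquiv.ext fun p => rfl

/-- The wreath product `C_{2^m} ≀ C₂`. -/
abbrev WreathC2 (m : ℕ) : Type :=
  SemidirectProduct (Multiplicative (ZMod (2 ^ m)) × Multiplicative (ZMod (2 ^ m)))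
    (Multiplicative (ZMod 2)) (swapHom _)


/-! For any commutative group `A` embedded in the units of a commutative ring `R`, the map
`((a, b), s) ↦ diag(a, b) * tˢ` embeds `A ≀ C₂` into `GL₂(R)`, because conjugation by the
swap matrix `t` exchanges the diagonal entries. For `A = ⟨η⟩ ≅ C_{2^m}` its image is the
subgroup generated by `diag(η, 1)`, `diag(1, η)` and `t`, of order `2^(2m+1)`. Since
`|GL₂(F_q)| = q (q - 1)² (q + 1)` with `q` odd, `v₂(q - 1) = m` and `v₂(q + 1) = 1`
(as `q ≡ 1 mod 4`), this is the full `2`-part of the order, so the image is a Sylow subgroup. -/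

open Subgroup

section zmodLift

variable {G : Type*} [Group G] {n : ℕ}

def zmodLift (g : G) (hg : g ^ n = 1) : Multiplicative (ZMod n) →* G :=
  AddMonoidHom.toMultiplicativeLeft <| ZMod.lift n
    ⟨zmultiplesHom (Additive G) (Additive.ofMul g), by simp [← ofMul_pow, hg]⟩

@[simp]
theorem zmodLift_ofAdd_intCast (g : G) (hg : g ^ n = 1) (k : ℤ) :
    zmodLift g hg (.ofAdd (k : ZMod n)) = g ^ k := by
  simp [zmodLift, ← ofMul_zpow]

@[simp]
theorem zmodLift_ofAdd_one (g : G) (hg : g ^ n = 1) : zmodLift g hg (.ofAdd 1) = g := by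
  simpa using zmodLift_ofAdd_intCast g hg 1

theorem zmodLift_injective {g : G} (hg : g ^ n = 1) (h : orderOf g = n) :
    Function.Injective (zmodLift g hg) := by
  rw [injective_iff_map_eq_one]
  intro a ha
  obtain ⟨k, hk⟩ := ZMod.intCast_surjective a.toAdd
  rw [← ofAdd_toAdd a, ← hk, zmodLift_ofAdd_intCast, ← orderOf_dvd_iff_zpow_eq_one, h] at ha
  rw [← ofAdd_toAdd a, ← hk, (ZMod.intCast_zmod_eq_zero_iff_dvd k n).mpr ha, ofAdd_zero]

theorem mem_zpowers_ofAdd_one (a : Multiplicative (ZMod n)) : a ∈ zpowers (.ofAdd 1) := by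
  obtain ⟨k, hk⟩ := ZMod.intCast_surjective a.toAdd
  exact ⟨k, show _ ^ k = a by rw [← ofAdd_zsmul, zsmul_one, hk, ofAdd_toAdd]⟩

theorem zmod_two_eq_one_or_eq_ofAdd_one (s : Multiplicative (ZMod 2)) : s = 1 ∨ s = .ofAdd 1 := by
  decide +revert

end zmodLift

section swap

variable {A : Type} [CommGroup A]

theorem swapMulAut_apply (p : A × A) : swapMulAut A p = p.swap :=
  rfl

theorem swapHom_ofAdd_one : swapHom A (.ofAdd 1) = swapMulAut A := by
  simp [swapHom]

end swap

theorem MonoidHom.apply_mem_zpowers {A G : Type*} [Group A] [Group G] (f : A →* G) {g a : A}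
    (ha : a ∈ zpowers g) : f a ∈ zpowers (f g) := by
  rw [← f.map_zpowers]
  exact mem_map_of_mem f ha

section GL2

variable {R : Type*} [CommRing R]

def diagGL2 : Rˣ × Rˣ →* GL (Fin 2) R where
  toFun p := ⟨!![(p.1 : R), 0; 0, p.2], !![(↑p.1⁻¹ : R), 0; 0, ↑p.2⁻¹],
    by simp [Matrix.one_fin_two], by simp [Matrix.one_fin_two]⟩
  map_one' := by ext : 1; simp [Matrix.one_fin_two]
  map_mul' p q := by ext : 1; simp

@[simp]
theorem coe_diagGL2 (p : Rˣ × Rˣ) :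
    (diagGL2 p : Matrix (Fin 2) (Fin 2) R) = !![(p.1 : R), 0; 0, p.2] :=
  rfl

theorem diagGL2_injective : Function.Injective (diagGL2 (R := R)) := by
  intro p p' h
  have h' := congrArg (fun M : GL (Fin 2) R => (M : Matrix (Fin 2) (Fin 2) R)) h
  simp only [coe_diagGL2] at h'
  exact Prod.ext (Units.ext (by simpa using congr_fun₂ h' 0 0))
    (Units.ext (by simpa using congr_fun₂ h' 1 1))

variable {t : GL (Fin 2) R}

theorem sq_eq_one_of_coe_eq_swap (ht : (t : Matrix (Fin 2) (Fin 2) R) = !![0, 1; 1, 0]) :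
    t ^ 2 = 1 := by
  ext : 1
  simp [sq, ht, Matrix.one_fin_two]

theorem mul_diagGL2_of_coe_eq_swap (ht : (t : Matrix (Fin 2) (Fin 2) R) = !![0, 1; 1, 0])
    (p : Rˣ × Rˣ) : t * diagGL2 p = diagGL2 p.swap * t := by
  ext : 1
  simp [ht]

variable {A : Type} [CommGroup A] (f : A →* Rˣ)
  (ht : (t : Matrix (Fin 2) (Fin 2) R) = !![0, 1; 1, 0])

def wreathToGL2 : (A × A) ⋊[swapHom A] Multiplicative (ZMod 2) →* GL (Fin 2) R :=
  SemidirectProduct.lift (diagGL2.comp (f.prodMap f)) (zmodLift t (sq_eq_one_of_coe_eq_swap ht))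
    (by
      intro s
      refine MonoidHom.ext fun p => ?_
      rcases zmod_two_eq_one_or_eq_ofAdd_one s with rfl | rfl
      · simp
      · simp only [swapHom_ofAdd_one, swapMulAut_apply, zmodLift_ofAdd_one, MonoidHom.comp_apply,
          MulEquiv.coe_toMonoidHom, MulAut.conj_apply, MonoidHom.coe_prodMap]
        rw [mul_diagGL2_of_coe_eq_swap ht, mul_inv_cancel_right]
        rfl)

theorem wreathToGL2_apply (w : (A × A) ⋊[swapHom A] Multiplicative (ZMod 2)) :
    wreathToGL2 f ht w =
      diagGL2 (f w.left.1, f w.left.2) * zmodLift t (sq_eq_one_of_coe_eq_swap ht) w.right :=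
  rfl

theorem wreathToGL2_injective [Nontrivial R] (hf : Function.Injective f) :
    Function.Injective (wreathToGL2 f ht) := by
  rw [injective_iff_map_eq_one]
  rintro ⟨p, s⟩ h
  rw [wreathToGL2_apply] at h
  rcases zmod_two_eq_one_or_eq_ofAdd_one s with rfl | rfl
  · rw [map_one, mul_one] at h
    have hinj : Function.Injective (diagGL2.comp (f.prodMap f)) :=
      diagGL2_injective.comp (hf.prodMap hf)
    have hp : p = 1 := ((injective_iff_map_eq_one' _).mp hinj p).mp h
    rw [hp]
    rfl
  · -- `diag(a, b) * t` has a zero diagonal, so it is not the identity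
    have h00 := congrArg (fun M : GL (Fin 2) R => (M : Matrix (Fin 2) (Fin 2) R) 0 0) h
    simp [ht] at h00

theorem range_wreathToGL2 {g : A} (hg : ∀ a, a ∈ zpowers g) :
    (wreathToGL2 f ht).range = closure {diagGL2 (f g, 1), diagGL2 (1, f g), t} := by
  apply le_antisymm
  · rintro _ ⟨⟨⟨a, b⟩, s⟩, rfl⟩
    have hsplit : diagGL2 (f a, f b) = diagGL2 (f a, 1) * diagGL2 (1, f b) := by
      rw [← map_mul, Prod.mk_mul_mk, mul_one, one_mul]
    rw [wreathToGL2_apply, hsplit]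
    refine mul_mem (mul_mem ?_ ?_) ?_
    · exact zpowers_le.mpr (subset_closure (by simp))
        ((diagGL2.comp ((MonoidHom.inl _ _).comp f)).apply_mem_zpowers (hg a))
    · exact zpowers_le.mpr (subset_closure (by simp))
        ((diagGL2.comp ((MonoidHom.inr _ _).comp f)).apply_mem_zpowers (hg b))
    · have hs := (zmodLift t (sq_eq_one_of_coe_eq_swap ht)).apply_mem_zpowers
        (mem_zpowers_ofAdd_one s)
      rw [zmodLift_ofAdd_one] at hs
      exact zpowers_le.mpr (subset_closure (by simp)) hs
  · rw [closure_le]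
    rintro _ (rfl | rfl | rfl)
    · exact ⟨SemidirectProduct.inl (g, 1), by simp [wreathToGL2]⟩
    · exact ⟨SemidirectProduct.inl (1, g), by simp [wreathToGL2]⟩
    · exact ⟨SemidirectProduct.inr (.ofAdd 1), by simp [wreathToGL2]⟩

end GL2

theorem card_wreathC2 (m : ℕ) : Nat.card (WreathC2 m) = 2 ^ (2 * m + 1) := by
  rw [SemidirectProduct.card, Nat.card_prod]
  simp only [Nat.card_eq_fintype_card, Fintype.card_multiplicative, ZMod.card]
  ring

theorem Nat.factorization_eq_of_pow_dvd_of_not_pow_succ_dvd {n p k : ℕ} (hp : p.Prime)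
    (h : p ^ k ∣ n) (h' : ¬p ^ (k + 1) ∣ n) : n.factorization p = k := by
  have hn : n ≠ 0 := by rintro rfl; exact h' (dvd_zero _)
  rw [← Nat.multiplicity_eq_factorization hp hn]
  exact multiplicity_eq_of_dvd_of_not_dvd h h'

theorem card_GL_two_field (F : Type*) [Field F] [Fintype F] :
    Nat.card (GL (Fin 2) F) =
      Fintype.card F * (Fintype.card F - 1) ^ 2 * (Fintype.card F + 1) := by
  have hq : 1 ≤ Fintype.card F := Fintype.card_pos
  rw [Matrix.card_GL_field, Fin.prod_univ_two, Fin.val_zero, Fin.val_one, pow_zero, pow_one]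
  zify [hq, Nat.one_le_pow 2 _ hq, Nat.le_self_pow two_ne_zero (Fintype.card F)]
  ring

theorem factorization_two_mul_sub_one_sq_mul_add_one {q m : ℕ} (h4 : q % 4 = 1)
    (hdvd : 2 ^ m ∣ q - 1) (hndvd : ¬2 ^ (m + 1) ∣ q - 1) :
    (q * (q - 1) ^ 2 * (q + 1)).factorization 2 = 2 * m + 1 := by
  have hq : q.factorization 2 = 0 := Nat.factorization_eq_zero_of_not_dvd (by omega)
  have hq_sub : (q - 1).factorization 2 = m :=
    Nat.factorization_eq_of_pow_dvd_of_not_pow_succ_dvd Nat.prime_two hdvd hndvd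
  have hq_add : (q + 1).factorization 2 = 1 :=
    Nat.factorization_eq_of_pow_dvd_of_not_pow_succ_dvd Nat.prime_two
      (by rw [pow_one]; omega) (by norm_num; omega)
  have hq0 : q ≠ 0 := by omega
  have hq_sub0 : (q - 1) ^ 2 ≠ 0 :=
    pow_ne_zero 2 fun h => hndvd (by rw [h]; exact dvd_zero _)
  rw [Nat.factorization_mul (mul_ne_zero hq0 hq_sub0) q.succ_ne_zero,
    Nat.factorization_mul hq0 hq_sub0, Nat.factorization_pow]
  simp only [Finsupp.add_apply, Finsupp.smul_apply, smul_eq_mul, hq, hq_sub, hq_add]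
  ring

theorem sylow_two_of_GL2_is_wreath_general
    (q m : ℕ) (hq1 : q % 4 = 1)
    (hdvd : 2 ^ m ∣ q - 1) (hndvd : ¬ 2 ^ (m + 1) ∣ q - 1)
    (F : Type) [Field F] [Fintype F] (hF : Fintype.card F = q)
    (η : F) (hη : orderOf η = 2 ^ m)
    (x y t : GL (Fin 2) F)
    (hx : (x : Matrix (Fin 2) (Fin 2) F) = !![η, 0; 0, 1])
    (hy : (y : Matrix (Fin 2) (Fin 2) F) = !![1, 0; 0, η])
    (ht : (t : Matrix (Fin 2) (Fin 2) F) = !![0, 1; 1, 0]) :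
    (∃ P : Sylow 2 (GL (Fin 2) F), (P : Subgroup (GL (Fin 2) F)) = Subgroup.closure {x, y, t}) ∧
    Nonempty ((Subgroup.closure {x, y, t} : Subgroup (GL (Fin 2) F)) ≃* WreathC2 m) := by
  have hη0 : η ≠ 0 := by
    rintro rfl
    exact pow_ne_zero m two_ne_zero (by simpa using hη.symm)
  have hu : orderOf (Units.mk0 η hη0) = 2 ^ m := by rw [← orderOf_units, Units.val_mk0, hη]
  set ψ := zmodLift (Units.mk0 η hη0) (hu ▸ pow_orderOf_eq_one _)
  have hx' : x = diagGL2 (ψ (.ofAdd 1), 1) := by ext : 1; simp [ψ, hx]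
  have hy' : y = diagGL2 (1, ψ (.ofAdd 1)) := by ext : 1; simp [ψ, hy]
  have hrange : (wreathToGL2 ψ ht).range = closure {x, y, t} := by
    rw [range_wreathToGL2 ψ ht mem_zpowers_ofAdd_one, hx', hy']
  let e : closure {x, y, t} ≃* WreathC2 m :=
    ((MonoidHom.ofInjective (wreathToGL2_injective ψ ht (zmodLift_injective _ hu))).trans
      (MulEquiv.subgroupCongr hrange)).symm
  have hcard : Nat.card (closure {x, y, t}) = 2 ^ (Nat.card (GL (Fin 2) F)).factorization 2 := by
    rw [Nat.card_congr e.toEquiv, card_wreathC2, card_GL_two_field, hF,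
      factorization_two_mul_sub_one_sq_mul_add_one hq1 hdvd hndvd]
  exact ⟨⟨Sylow.ofCard _ hcard, rfl⟩, ⟨e⟩⟩

/-- For `q ≡ 1 (mod 4)` a prime power with `2^m` the exact power of `2` in `q-1`
and `η` a primitive `2^m`-th root of unity in `F_q`, the subgroup of `GL₂(F_q)` generated by
`diag(η,1)`, `diag(1,η)` and the swap permutation matrix is a Sylow `2`-subgroup of `GL₂(F_q)`
isomorphic to the wreath product `C_{2^m} ≀ C₂`. -/
theorem sylow_two_of_GL2_is_wreath
    (q m : ℕ) (hq : IsPrimePow q) (hq1 : q % 4 = 1)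
    (hdvd : 2 ^ m ∣ q - 1) (hndvd : ¬ 2 ^ (m + 1) ∣ q - 1)
    (F : Type) [Field F] [Fintype F] (hF : Fintype.card F = q)
    (η : F) (hη : orderOf η = 2 ^ m)
    (x y t : GL (Fin 2) F)
    (hx : (x : Matrix (Fin 2) (Fin 2) F) = !![η, 0; 0, 1])
    (hy : (y : Matrix (Fin 2) (Fin 2) F) = !![1, 0; 0, η])
    (ht : (t : Matrix (Fin 2) (Fin 2) F) = !![0, 1; 1, 0]) :
    (∃ P : Sylow 2 (GL (Fin 2) F), (P : Subgroup (GL (Fin 2) F)) = Subgroup.closure {x, y, t}) ∧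
    Nonempty ((Subgroup.closure {x, y, t} : Subgroup (GL (Fin 2) F)) ≃* WreathC2 m) :=
  sylow_two_of_GL2_is_wreath_general q m hq1 hdvd hndvd F hF η hη x y t hx hy ht
end

section
/- For m ≥ 3, the automorphism group of the semidihedral group SD_{2^m} is a 2-group. -/
/-!
Let `H = ⟨x⟩`, a subgroup of index two. As `4 ∣ |H|`, the involutions of `H` are squares, whereas
`t ∉ H` is not a square because all squares lie in `H`; so no automorphism maps `t` into `H`, and
counting parities in `G ⧸ H` then shows that `ψ ^ 2` maps `x` into `H` for every automorphism `ψ`.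
An automorphism `φ` with `φ x = x ^ i` satisfies `φ ^ n x = x ^ i ^ n`, so by Euler's theorem
`φ ^ totient (2 ^ (m - 1))` fixes `x`. An automorphism `χ` fixing `x` sends `t` to `y * t` with
`y ∈ H`, so `χ ^ n t = y ^ n * t` and `χ ^ (2 ^ (m - 1))` fixes `t` as well. Hence
`ψ ^ (2 * 2 ^ (m - 2) * 2 ^ (m - 1)) = 1`.
-/

open Subgroup

namespace MulAut

variable {G : Type*} [Group G]

theorem eq_one_of_closure_eq_top {s : Set G} (hs : closure s = ⊤) {ψ : MulAut G}
    (h : ∀ g ∈ s, ψ g = g) : ψ = 1 :=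
  MulEquiv.toMonoidHom_injective <| MonoidHom.eq_of_eqOn_dense hs h

theorem pow_apply_eq_pow_pow {ψ : MulAut G} {x : G} {i : ℕ} (h : ψ x = x ^ i) (n : ℕ) :
    (ψ ^ n) x = x ^ i ^ n := by
  induction n with
  | zero => simp
  | succ n ih => rw [pow_succ', mul_apply, ih, map_pow, h, ← pow_mul, pow_succ']

theorem pow_totient_apply_eq_self {ψ : MulAut G} {x : G} (h : ψ x ∈ zpowers x) :
    (ψ ^ (orderOf x).totient) x = x := by
  rcases (orderOf x).eq_zero_or_pos with h0 | h0
  · simp [h0]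
  have hfin : IsOfFinOrder x := orderOf_pos_iff.mp h0
  obtain ⟨i, hi⟩ : ψ x ∈ Submonoid.powers x := hfin.mem_powers_iff_mem_zpowers.mpr h
  have hcop : i.Coprime (orderOf x) := by
    have hord := ψ.orderOf_eq x
    rw [← hi, hfin.orderOf_pow, Nat.div_eq_self] at hord
    exact Nat.coprime_comm.mp (hord.resolve_left h0.ne')
  conv_rhs => rw [← pow_one x]
  rw [pow_apply_eq_pow_pow hi.symm, pow_eq_pow_iff_modEq]
  exact Nat.ModEq.pow_totient hcop

theorem pow_orderOf_apply_eq_self {ψ : MulAut G} {x t : G} (hx : ψ x = x)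
    (ht : ψ t * t⁻¹ ∈ zpowers x) : (ψ ^ orderOf x) t = t := by
  obtain ⟨k, hk⟩ := mem_zpowers_iff.mp ht
  have hψt : ψ t = x ^ k * t := by rw [hk, inv_mul_cancel_right]
  have hpow : ∀ n : ℕ, (ψ ^ n) t = (x ^ k) ^ n * t := by
    intro n
    induction n with
    | zero => simp
    | succ n ih =>
      rw [pow_succ', mul_apply, ih, map_mul, map_pow, map_zpow, hx, hψt, ← mul_assoc, pow_succ]
  rw [hpow, ← zpow_natCast, ← zpow_mul, mul_comm, zpow_mul, zpow_natCast, pow_orderOf_eq_one,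
    one_zpow, one_mul]

theorem apply_notMem_zpowers {x t : G} (h4 : 4 ∣ orderOf x) (ht : t ^ 2 = 1)
    (hidx : (zpowers x).index = 2) (htx : t ∉ zpowers x) (ψ : MulAut G) :
    ψ t ∉ zpowers x := by
  intro hψt
  obtain ⟨k, hk⟩ := mem_zpowers_iff.mp hψt
  obtain ⟨c, rfl⟩ : 2 ∣ k := by
    have h1 : x ^ (2 * k) = 1 := by
      rw [mul_comm, zpow_mul, hk, zpow_two, ← map_mul, ← sq, ht, map_one]
    have h2 : (4 : ℤ) ∣ 2 * k :=
      dvd_trans (by exact_mod_cast h4) (orderOf_dvd_iff_zpow_eq_one.mpr h1)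
    omega
  have hsq : (ψ.symm (x ^ c)) ^ 2 = t := by
    rw [← map_pow, ← zpow_natCast, ← zpow_mul, mul_comm, Nat.cast_ofNat, hk,
      ψ.symm_apply_apply]
  exact htx (hsq ▸ sq_mem_of_index_two hidx _)

end MulAut

theorem Subgroup.notMem_zpowers_of_closure_pair_eq_top {G : Type*} [Group G] {x t : G}
    (hgen : closure {x, t} = ⊤) (hx : zpowers x ≠ ⊤) : t ∉ zpowers x := fun ht ↦ by
  refine hx (top_le_iff.mp ?_)
  rw [← hgen, closure_le]
  rintro g (rfl | rfl)
  exacts [mem_zpowers g, ht]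

theorem zpow_mul_sq_of_mul_mul_eq_pow {G : Type*} [Group G] {x t : G} {r : ℕ} (ht : t ^ 2 = 1)
    (hrel : t * x * t = x ^ r) (j : ℤ) : (x ^ j * t) ^ 2 = x ^ ((r + 1) * j) := by
  have htinv : t⁻¹ = t := inv_eq_of_mul_eq_one_right (by rwa [← sq])
  have hconj : t * x ^ j * t = x ^ (r * j) :=
    calc t * x ^ j * t = (t * x * t⁻¹) ^ j := by rw [conj_zpow, htinv]
      _ = x ^ (r * j) := by rw [htinv, hrel, zpow_mul, zpow_natCast]
  calc (x ^ j * t) ^ 2 = x ^ j * (t * x ^ j * t) := by simp only [sq, mul_assoc]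
    _ = x ^ ((r + 1) * j) := by rw [hconj, ← zpow_add]; ring_nf

namespace Semidihedral

variable {G : Type*} [Group G] {x t : G} {m : ℕ}

theorem index_zpowers_eq_two (hm : 1 ≤ m) (hx : orderOf x = 2 ^ (m - 1))
    (hcard : Nat.card G = 2 ^ m) : (zpowers x).index = 2 := by
  obtain ⟨n, rfl⟩ : ∃ n, m = n + 1 := ⟨m - 1, by omega⟩
  have h := (zpowers x).card_mul_index
  rw [Nat.card_zpowers, hx, hcard, Nat.add_sub_cancel, pow_succ] at h
  exact Nat.eq_of_mul_eq_mul_left (by positivity) h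

theorem four_dvd_orderOf (hm : 3 ≤ m) (hx : orderOf x = 2 ^ (m - 1)) : 4 ∣ orderOf x :=
  hx ▸ pow_dvd_pow 2 (by omega : 2 ≤ m - 1)

theorem apply_apply_mem_zpowers (hm : 3 ≤ m) (hx : orderOf x = 2 ^ (m - 1)) (ht : t ^ 2 = 1)
    (hrel : t * x * t = x ^ (2 ^ (m - 2) - 1)) (hidx : (zpowers x).index = 2)
    (htx : t ∉ zpowers x) (ψ : MulAut G) : ψ (ψ x) ∈ zpowers x := by
  by_cases hψx : ψ x ∈ zpowers x
  · obtain ⟨i, hi⟩ := mem_zpowers_iff.mp hψx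
    rw [← hi, map_zpow]
    exact zpow_mem hψx i
  have hψt := ψ.apply_notMem_zpowers (four_dvd_orderOf hm hx) ht hidx htx
  obtain ⟨i, hi⟩ := mem_zpowers_iff.mp <| (mul_mem_iff_of_index_two hidx).mpr <|
    iff_of_false hψx (inv_mem_iff.not.mpr htx)
  have hψx' : ψ x = x ^ i * t := by rw [hi, inv_mul_cancel_right]
  obtain ⟨c, rfl⟩ : Odd i := by
    refine Int.not_even_iff_odd.mp fun ⟨c, hc⟩ ↦ ?_
    have hsq : (ψ x) ^ 2 = 1 := by
      rw [hψx', zpow_mul_sq_of_mul_mul_eq_pow ht hrel, ← orderOf_dvd_iff_zpow_eq_one, hx, hc]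
      refine ⟨c, ?_⟩
      push_cast [Nat.one_le_two_pow, show m - 1 = m - 2 + 1 by omega]
      ring
    have h2 := orderOf_dvd_of_pow_eq_one hsq
    rw [ψ.orderOf_eq] at h2
    have := Nat.le_of_dvd two_pos (dvd_trans (four_dvd_orderOf hm hx) h2)
    omega
  -- `ψ (ψ x) = (ψ x) ^ (2 * c + 1) * ψ t` is a product of two elements outside `H`
  rw [hψx', map_mul, map_zpow, mul_mem_iff_of_index_two hidx, zpow_add_one, zpow_mul,
    mul_mem_iff_of_index_two hidx]
  simp [zpow_mem (sq_mem_of_index_two hidx (ψ x)), hψx, hψt]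

end Semidihedral

/-- For `m ≥ 3`, the automorphism group of the semidihedral group `SD_{2^m}`
(a group of order `2^m` with generators `x, t` satisfying the semidihedral relations)
is a `2`-group. -/
theorem aut_semidihedral_two_group
    (m : ℕ) (hm : 3 ≤ m)
    (G : Type) [Group G] (x t : G)
    (hx : orderOf x = 2 ^ (m - 1)) (ht : t ^ 2 = 1)
    (hrel : t * x * t = x ^ (2 ^ (m - 2) - 1))
    (hgen : Subgroup.closure {x, t} = (⊤ : Subgroup G))
    (hcard : Nat.card G = 2 ^ m) :
    IsPGroup 2 (MulAut G) := by
  have hidx := Semidihedral.index_zpowers_eq_two (by omega) hx hcard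
  have htx := notMem_zpowers_of_closure_pair_eq_top hgen fun h ↦ by simp [h] at hidx
  have hτ : (orderOf x).totient = 2 ^ (m - 2) := by
    rw [hx, Nat.totient_prime_pow Nat.prime_two (by omega), Nat.sub_sub]
    norm_num
  intro ψ
  set χ := (ψ ^ 2) ^ (orderOf x).totient with hχ
  have hχx : χ x = x := MulAut.pow_totient_apply_eq_self <| by
    simpa [pow_two] using Semidihedral.apply_apply_mem_zpowers hm hx ht hrel hidx htx ψ
  have hχt : (χ ^ orderOf x) t = t :=
    MulAut.pow_orderOf_apply_eq_self hχx <| (mul_mem_iff_of_index_two hidx).mpr <| iff_of_false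
      (χ.apply_notMem_zpowers (Semidihedral.four_dvd_orderOf hm hx) ht hidx htx)
      (inv_mem_iff.not.mpr htx)
  have hexp : ψ ^ 2 ^ (1 + (m - 2) + (m - 1)) = χ ^ orderOf x := by
    rw [hχ, hτ, hx, ← pow_mul, ← pow_mul, pow_add, pow_add, pow_one, mul_assoc]
  refine ⟨1 + (m - 2) + (m - 1), MulAut.eq_one_of_closure_eq_top hgen ?_⟩
  rintro g (rfl | rfl)
  · rw [hexp]
    exact smul_eq_self_of_mem_zpowers (pow_mem (mem_zpowers χ) _) hχx
  · rw [hexp, hχt]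
end

section
/- The group algebra k[S_3] over an algebraically closed field k of characteristic 2 is isomorphic as a k-algebra to k[C_2] × M_2(k). -/
/-!
Let `S₃` act on `𝔽₂²` by permuting its three nonzero vectors; this identifies `S₃` with
`GL₂(𝔽₂)`. Together with the sign `S₃ → C₂` it gives an algebra map
`k[S₃] → k[C₂] × M₂(k)`. For a 3-cycle `c`, the element `1 + c + c²` maps to `(1, 0)`:
in characteristic 2 we have `3 = 1`, and `1 + C + C² = 0` for the image `C` of `c`, which has
order 3 in `GL₂(𝔽₂)`. Multiplying by this idempotent splits the map, so it is onto as soon as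
each factor is: the sign is onto `C₂`, and every matrix unit of `M₂(𝔽₂)` is a sum of two
invertible matrices. Both sides have dimension 6, so the map is an isomorphism.
-/

open Equiv MonoidAlgebra

theorem MonoidAlgebra.lift_surjective_of_span_range_eq_top {k G A : Type*} [CommSemiring k]
    [Monoid G] [Semiring A] [Algebra k A] (φ : G →* A)
    (h : Submodule.span k (Set.range φ) = ⊤) : Function.Surjective (lift k A G φ) := by
  have hle : Submodule.span k (Set.range φ) ≤ LinearMap.range (lift k A G φ).toLinearMap :=
    Submodule.span_le.2 <| Set.range_subset_iff.2 fun g => ⟨of k G g, lift_of φ g⟩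
  exact fun a => hle (h ▸ Submodule.mem_top)

theorem Module.Basis.span_eq_top_of_mem_span {k M ι : Type*} [Semiring k] [AddCommMonoid M]
    [Module k M] (b : Module.Basis ι k M) {s : Set M} (h : ∀ i, b i ∈ Submodule.span k s) :
    Submodule.span k s = ⊤ :=
  eq_top_iff.2 <| b.span_eq.symm.le.trans <| Submodule.span_le.2 <| Set.range_subset_iff.2 h

theorem AlgHom.prod_surjective_of_one_zero_mem_range {k R A B : Type*} [CommSemiring k]
    [Ring R] [Ring A] [Ring B] [Algebra k R] [Algebra k A] [Algebra k B]
    {f : R →ₐ[k] A} {g : R →ₐ[k] B} (hf : Function.Surjective f) (hg : Function.Surjective g)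
    (he : (1, 0) ∈ (f.prod g).range) : Function.Surjective (f.prod g) := by
  obtain ⟨e, he⟩ := he
  have hfe : f e = 1 := congrArg Prod.fst he
  have hge : g e = 0 := congrArg Prod.snd he
  rintro ⟨a, b⟩
  obtain ⟨x, rfl⟩ := hf a
  obtain ⟨y, rfl⟩ := hg b
  exact ⟨e * x + (1 - e) * y, by simp [hfe, hge]⟩

def nonzeroVec : Fin 3 → Fin 2 → ZMod 2 := ![![1, 0], ![0, 1], ![1, 1]]

def permGL2 : Perm (Fin 3) →* Matrix (Fin 2) (Fin 2) (ZMod 2) where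
  toFun g := Matrix.of fun i j => nonzeroVec (g j.castSucc) i
  map_one' := by decide
  map_mul' := by decide

def signC2 : Perm (Fin 3) →* Multiplicative (ZMod 2) where
  toFun g := .ofAdd (if Perm.sign g = 1 then 0 else 1)
  map_one' := by decide
  map_mul' := by decide

theorem signC2_surjective : Function.Surjective signC2 := by decide

theorem signC2_finRotate : signC2 (finRotate 3) = 1 := by decide

theorem exists_permGL2_add_eq_single :
    ∀ i j, ∃ g h, permGL2 g + permGL2 h = Matrix.single i j 1 := by
  decide

theorem one_add_permGL2_finRotate_add_sq :
    1 + permGL2 (finRotate 3) + permGL2 (finRotate 3 ^ 2) = 0 := by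
  decide

theorem lift_signC2_surjective (k : Type*) [CommSemiring k] :
    Function.Surjective (lift k _ _ ((of k _).comp signC2)) := by
  refine lift_surjective_of_span_range_eq_top _ <|
    (MonoidAlgebra.basis _ k).span_eq_top_of_mem_span fun s => ?_
  obtain ⟨g, rfl⟩ := signC2_surjective s
  exact Submodule.subset_span ⟨g, rfl⟩

section CharTwo

variable (k : Type*) [CommRing k] [CharP k 2]

theorem lift_permGL2_surjective : Function.Surjective
    (lift k _ _ ((ZMod.castHom dvd_rfl k).mapMatrix.toMonoidHom.comp permGL2)) := by
  refine lift_surjective_of_span_range_eq_top _ <|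
    (Matrix.stdBasis k _ _).span_eq_top_of_mem_span fun ⟨i, j⟩ => ?_
  obtain ⟨g, h, hgh⟩ := exists_permGL2_add_eq_single i j
  have hij : Matrix.stdBasis k _ _ (i, j) =
      (ZMod.castHom dvd_rfl k).mapMatrix (permGL2 g + permGL2 h) := by
    rw [hgh, Matrix.stdBasis_eq_single]
    simp
  rw [hij, map_add]
  exact add_mem (Submodule.subset_span ⟨g, rfl⟩) (Submodule.subset_span ⟨h, rfl⟩)

noncomputable def groupAlgebraS3Hom :
    MonoidAlgebra k (Perm (Fin 3)) →ₐ[k]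
      MonoidAlgebra k (Multiplicative (ZMod 2)) × Matrix (Fin 2) (Fin 2) k :=
  (lift k _ _ ((of k _).comp signC2)).prod
    (lift k _ _ ((ZMod.castHom dvd_rfl k).mapMatrix.toMonoidHom.comp permGL2))

theorem groupAlgebraS3Hom_of (g : Perm (Fin 3)) : groupAlgebraS3Hom k (of k _ g) =
    (of k _ (signC2 g), (ZMod.castHom dvd_rfl k).mapMatrix (permGL2 g)) := by
  simp [groupAlgebraS3Hom]

theorem one_zero_mem_range_groupAlgebraS3Hom : (1, 0) ∈ (groupAlgebraS3Hom k).range := by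
  refine (AlgHom.mem_range _).2
    ⟨1 + of k _ (finRotate 3) + of k _ (finRotate 3 ^ 2), Prod.ext ?_ ?_⟩ <;>
    rw [map_add, map_add, map_one, groupAlgebraS3Hom_of, groupAlgebraS3Hom_of]
  · have two_eq_zero := congrArg (algebraMap k (MonoidAlgebra k (Multiplicative (ZMod 2))))
      (CharTwo.two_eq_zero (R := k))
    rw [map_ofNat, map_zero] at two_eq_zero
    simp only [Prod.fst_add, Prod.fst_one, map_pow, signC2_finRotate, one_pow, map_one]
    linear_combination two_eq_zero
  · simpa only [Prod.snd_add, Prod.snd_one, map_add, map_one, map_zero] using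
      congrArg (ZMod.castHom dvd_rfl k).mapMatrix one_add_permGL2_finRotate_add_sq

theorem groupAlgebraS3Hom_surjective : Function.Surjective (groupAlgebraS3Hom k) :=
  AlgHom.prod_surjective_of_one_zero_mem_range (lift_signC2_surjective k)
    (lift_permGL2_surjective k) (one_zero_mem_range_groupAlgebraS3Hom k)

end CharTwo

theorem groupAlgebraS3Hom_bijective (k : Type*) [Field k] [CharP k 2] :
    Function.Bijective (groupAlgebraS3Hom k) := by
  have hrank : Module.finrank k (MonoidAlgebra k (Perm (Fin 3))) =
      Module.finrank k (MonoidAlgebra k (Multiplicative (ZMod 2)) × Matrix (Fin 2) (Fin 2) k) := by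
    simp [Module.finrank_eq_card_basis (MonoidAlgebra.basis _ k), Module.finrank_matrix,
      Fintype.card_perm, Nat.factorial]
  have hsurj := groupAlgebraS3Hom_surjective k
  exact ⟨(LinearMap.injective_iff_surjective_of_finrank_eq_finrank
    (f := (groupAlgebraS3Hom k).toLinearMap) hrank).2 hsurj, hsurj⟩

theorem group_algebra_S3_char_two_general
    (k : Type) [Field k] (hchar : ringChar k = 2) :
    Nonempty (MonoidAlgebra k (Equiv.Perm (Fin 3)) ≃ₐ[k]
      (MonoidAlgebra k (Multiplicative (ZMod 2)) × Matrix (Fin 2) (Fin 2) k)) :=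
  have := ringChar.of_eq hchar
  ⟨AlgEquiv.ofBijective _ (groupAlgebraS3Hom_bijective k)⟩

/-- Over an algebraically closed field `k` of characteristic `2`, the group
algebra `k[S₃]` is isomorphic as a `k`-algebra to `k[C₂] × M₂(k)`. -/
theorem group_algebra_S3_char_two
    (k : Type) [Field k] [IsAlgClosed k] (hchar : ringChar k = 2) :
    Nonempty (MonoidAlgebra k (Equiv.Perm (Fin 3)) ≃ₐ[k]
      (MonoidAlgebra k (Multiplicative (ZMod 2)) × Matrix (Fin 2) (Fin 2) k)) :=
  group_algebra_S3_char_two_general k hchar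
end

section
/- Let k be an algebraically closed field of characteristic 2, q an odd prime power, and V = k[P^1(F_q)] the permutation module for G = PGL_2(F_q) of dimension q+1. Then V_1 = k·(sum of all basis vectors) is a 1-dimensional G-submodule of V, V_1 is contained in the augmentation submodule W = {Σλ_v · v : Σλ_v = 0} (since q+1 is even), and W/V_1 is a simple kG-module of dimension q-1. -/
/-!
Simplicity already holds for the stabiliser of `∞` in `ℙ¹(F) = F ∪ {∞}`, the affine maps
`x ↦ s * x + t`. As `q` is odd and `char k = 2`, `q + 1 = 0` in `k`: the constants lie in `W`,
and every `f ∈ W` is `f ∞ • 1` plus the extension by zero of the zero-sum function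
`x ↦ f x - f ∞` on `F`. Since `char F ≠ 2`, the algebraically closed field `k` carries a
primitive additive character `ψ` of `F`, and Fourier inversion over the characters `ψ (a * ·)`
holds because `q ≠ 0` in `k`. Averaging the translates of a function `φ` on `F` against
`ψ (-(a * ·))` isolates `ψ (a * ·)` as soon as the `a`-th coefficient of `φ` is nonzero, and
dilations permute the nontrivial characters transitively. So an invariant `U` with
`V₁ < U ≤ W` contains all nontrivial characters extended by zero, which together with the
constants span `W`.
-/

open Matrix
open scoped LinearAlgebra.Projectivization

/-- The action of `g ∈ GL₂(F)` on the projective line `ℙ¹(F)`; this action factors through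
`PGL₂(F)`, and a subspace of the permutation module is `PGL₂`-invariant iff it is invariant
under this `GL₂`-action. -/
noncomputable def projAct (F : Type) [Field F] (g : GL (Fin 2) F) :
    ℙ F (Fin 2 → F) → ℙ F (Fin 2 → F) :=
  Projectivization.map
    ((Matrix.GeneralLinearGroup.toLin g).toLinearEquiv : (Fin 2 → F) →ₗ[F] (Fin 2 → F))
    (Matrix.GeneralLinearGroup.toLin g).toLinearEquiv.injective

section Augmentation

variable {k ι : Type*} [Field k]

lemma comp_mem_span_one {f : ι → k} (hf : f ∈ Submodule.span k {1}) (σ : ι → ι) :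
    f ∘ σ ∈ Submodule.span k {1} := by
  obtain ⟨c, rfl⟩ := Submodule.mem_span_singleton.mp hf
  exact hf

variable [Fintype ι]

variable (k ι) in
def augmentation : Submodule k (ι → k) :=
  LinearMap.ker (∑ i : ι, LinearMap.proj i)

lemma mem_augmentation {f : ι → k} : f ∈ augmentation k ι ↔ ∑ i, f i = 0 := by
  simp [augmentation]

lemma finrank_augmentation_add_one [Nonempty ι] :
    Module.finrank k (augmentation k ι) + 1 = Fintype.card ι := by
  classical
  rw [← Module.finrank_fintype_fun_eq_card k]
  refine Module.Dual.finrank_ker_add_one_of_ne_zero fun h => ?_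
  have := LinearMap.congr_fun h (Pi.single (Classical.arbitrary ι) 1)
  simp at this

lemma comp_mem_augmentation {σ : ι → ι} (hσ : σ.Bijective) {f : ι → k}
    (hf : f ∈ augmentation k ι) : f ∘ σ ∈ augmentation k ι := by
  rw [mem_augmentation] at hf ⊢
  rwa [Function.comp_def, Fintype.sum_bijective σ hσ _ f fun _ => rfl]

lemma span_one_le_augmentation (h : (Fintype.card ι : k) = 0) :
    Submodule.span k {1} ≤ augmentation k ι := by
  rw [Submodule.span_le, Set.singleton_subset_iff, SetLike.mem_coe, mem_augmentation]
  simp [h]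

lemma span_one_ne_augmentation (h : 2 < Fintype.card ι) :
    Submodule.span k {1} ≠ augmentation k ι := fun heq => by
  have : Nonempty ι := Fintype.card_pos_iff.mp (by omega)
  have hdim := finrank_augmentation_add_one (k := k) (ι := ι)
  rw [← heq, finrank_span_singleton one_ne_zero] at hdim
  omega

lemma finrank_augmentation_quotient_span_one [Nonempty ι] (h : (Fintype.card ι : k) = 0) :
    Module.finrank k (augmentation k ι ⧸ (Submodule.span k {1}).comap (augmentation k ι).subtype)
      = Fintype.card ι - 2 := by
  rw [Submodule.finrank_quotient,
    (Submodule.comapSubtypeEquivOfLe (span_one_le_augmentation h)).finrank_eq,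
    finrank_span_singleton one_ne_zero, ← finrank_augmentation_add_one (k := k)]
  omega

end Augmentation

section Fourier

variable {F k : Type*} [Field F] [Fintype F] [Field k] (ψ : AddChar F k)

def charCoeff (φ : F → k) (a : F) : k := ∑ x, ψ (-(a * x)) * φ x

lemma charCoeff_zero (φ : F → k) : charCoeff ψ φ 0 = ∑ x, φ x := by
  simp [charCoeff]

variable {ψ}

lemma sum_charCoeff_smul (hψ : ψ.IsPrimitive) (φ : F → k) :
    ∑ a, charCoeff ψ φ a • (fun x => ψ (a * x)) = (Fintype.card F : k) • φ := by
  classical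
  ext y
  have hsum : ∀ x, ∑ a, ψ (a * (y - x)) = if y - x = 0 then (Fintype.card F : k) else 0 :=
    fun x => by rw [AddChar.sum_mulShift _ hψ, Nat.cast_ite, Nat.cast_zero]
  simp only [Finset.sum_apply, Pi.smul_apply, smul_eq_mul]
  calc ∑ a, charCoeff ψ φ a * ψ (a * y)
      = ∑ x, (∑ a, ψ (a * (y - x))) * φ x := by
        simp only [charCoeff, Finset.sum_mul]
        rw [Finset.sum_comm]
        refine Finset.sum_congr rfl fun x _ => Finset.sum_congr rfl fun a _ => ?_
        rw [mul_sub, sub_eq_neg_add, AddChar.map_add_eq_mul]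
        ring
    _ = (Fintype.card F : k) * φ y := by
        simp [hsum, sub_eq_zero]

lemma exists_charCoeff_ne_zero (hψ : ψ.IsPrimitive) (hq : (Fintype.card F : k) ≠ 0)
    {φ : F → k} (hφ : φ ≠ 0) : ∃ a, charCoeff ψ φ a ≠ 0 := by
  by_contra! h
  have := sum_charCoeff_smul hψ φ
  simp only [h, zero_smul, Finset.sum_const_zero] at this
  exact hφ ((smul_eq_zero.mp this.symm).resolve_left hq)

lemma sum_char_smul_translate (φ : F → k) (a : F) :
    ∑ t, ψ (-(a * t)) • (fun x => φ (x + t)) = charCoeff ψ φ a • (fun x => ψ (a * x)) := by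
  ext x
  simp only [Finset.sum_apply, Pi.smul_apply, smul_eq_mul, charCoeff, Finset.sum_mul]
  refine Fintype.sum_equiv (Equiv.addLeft x) _ _ fun t => ?_
  have hinv : ψ (-(a * x)) * ψ (a * x) = 1 := by
    rw [← AddChar.map_add_eq_mul, neg_add_cancel, AddChar.map_zero_eq_one]
  simp only [Equiv.coe_addLeft, mul_add, neg_add, AddChar.map_add_eq_mul]
  linear_combination (-(ψ (-(a * t)) * φ (x + t))) * hinv

variable {S : Submodule k (F → k)}

lemma char_mem_of_charCoeff_ne_zero (hS : ∀ t, ∀ φ ∈ S, (fun x => φ (x + t)) ∈ S) {φ : F → k}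
    (hφ : φ ∈ S) {a : F} (ha : charCoeff ψ φ a ≠ 0) : (fun x => ψ (a * x)) ∈ S := by
  have h := S.sum_mem (t := Finset.univ) fun t _ => S.smul_mem (ψ (-(a * t))) (hS t φ hφ)
  rwa [sum_char_smul_translate, S.smul_mem_iff ha] at h

theorem augmentation_le_of_affine_invariant (hψ : ψ.IsPrimitive)
    (hq : (Fintype.card F : k) ≠ 0) (hS : ∀ s t, s ≠ 0 → ∀ φ ∈ S, (fun x => φ (s * x + t)) ∈ S)
    {φ : F → k} (hφS : φ ∈ S) (hφ : φ ∈ augmentation k F) (hφ0 : φ ≠ 0) :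
    augmentation k F ≤ S := by
  have htr : ∀ t, ∀ φ ∈ S, (fun x => φ (x + t)) ∈ S := fun t φ hφ => by
    simpa using hS 1 t one_ne_zero φ hφ
  obtain ⟨a, ha⟩ := exists_charCoeff_ne_zero hψ hq hφ0
  have ha0 : a ≠ 0 := by
    rintro rfl
    exact ha (by rwa [charCoeff_zero, ← mem_augmentation])
  have hchar : ∀ b ≠ 0, (fun x => ψ (b * x)) ∈ S := fun b hb => by
    simpa [← mul_assoc, ha0] using
      hS (a⁻¹ * b) 0 (by simp [ha0, hb]) _ (char_mem_of_charCoeff_ne_zero htr hφS ha)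
  intro χ hχ
  rw [← S.smul_mem_iff hq, ← sum_charCoeff_smul hψ]
  refine S.sum_mem fun b _ => ?_
  rcases eq_or_ne b 0 with rfl | hb
  · rw [charCoeff_zero, mem_augmentation.mp hχ, zero_smul]
    exact S.zero_mem
  · exact S.smul_mem _ (hchar b hb)

end Fourier

lemma ringChar_ne_ringChar_of_odd_card {k F : Type*} [Field k] [Field F] [Fintype F]
    (hk : ringChar k = 2) (hF : Odd (Fintype.card F)) : ringChar k ≠ ringChar F := fun h =>
  Nat.not_even_iff_odd.mpr hF (Nat.even_iff.mpr (FiniteField.even_card_of_char_two (h ▸ hk)))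

lemma exists_isPrimitive_addChar (F k : Type*) [Field F] [Finite F] [Field k] [IsAlgClosed k]
    (h : ringChar k ≠ ringChar F) : ∃ ψ : AddChar F k, ψ.IsPrimitive := by
  let χ := AddChar.FiniteField.primitiveChar F k h
  have : Algebra.IsAlgebraic k (CyclotomicField χ.n k) :=
    inferInstanceAs (Algebra.IsAlgebraic k (Polynomial.SplittingField _))
  let lift : CyclotomicField χ.n k →ₐ[k] k := IsAlgClosed.lift
  exact ⟨lift.toMonoidHom.compAddChar χ.char, χ.prim.compMulHom_of_isPrimitive lift.injective⟩

namespace ProjectiveLine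

variable (F : Type*) [Field F]

def infty : ℙ F (Fin 2 → F) := .mk F ![1, 0] (by simp)

def pt (x : F) : ℙ F (Fin 2 → F) := .mk F ![x, 1] (by simp)

variable {F}

lemma pt_injective : Function.Injective (pt F) := by
  intro x y h
  obtain ⟨a, ha⟩ := (Projectivization.mk_eq_mk_iff' F _ _ _ _).mp h
  have h1 := congrFun ha 1
  have h0 := congrFun ha 0
  simp only [Pi.smul_apply, smul_eq_mul] at h0 h1
  simp_all

lemma pt_ne_infty (x : F) : pt F x ≠ infty F := by
  intro h
  obtain ⟨a, ha⟩ := (Projectivization.mk_eq_mk_iff' F _ _ _ _).mp h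
  simpa using congrFun ha 1

@[elab_as_elim]
lemma ind {motive : ℙ F (Fin 2 → F) → Prop} (infty : motive (infty F))
    (pt : ∀ x, motive (pt F x)) (P : ℙ F (Fin 2 → F)) : motive P := by
  induction P using Projectivization.ind with
  | h v hv =>
    by_cases h1 : v 1 = 0
    · convert infty using 1
      rw [ProjectiveLine.infty, Projectivization.mk_eq_mk_iff']
      exact ⟨v 0, by ext i; fin_cases i <;> simp [h1]⟩
    · convert pt (v 0 / v 1) using 1
      rw [ProjectiveLine.pt, Projectivization.mk_eq_mk_iff']
      exact ⟨v 1, by ext i; fin_cases i <;> simp [mul_div_cancel₀ _ h1]⟩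

variable (F) in
noncomputable def optionEquiv : Option F ≃ ℙ F (Fin 2 → F) :=
  Equiv.ofBijective (fun o => o.elim (infty F) (pt F))
    ⟨by
      rintro (_ | x) (_ | y) h <;>
        simp_all [pt_ne_infty, (pt_ne_infty _).symm, pt_injective.eq_iff],
     fun P => by
      induction P using ind with
      | infty => exact ⟨none, rfl⟩
      | pt x => exact ⟨some x, rfl⟩⟩

lemma sum_eq_infty_add_sum_pt [Fintype F] [Fintype (ℙ F (Fin 2 → F))] {M : Type*}
    [AddCommMonoid M] (f : ℙ F (Fin 2 → F) → M) :
    ∑ P, f P = f (infty F) + ∑ x, f (pt F x) := by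
  rw [← (optionEquiv F).sum_comp, Fintype.sum_option]
  rfl

lemma extend_pt_infty {M : Type*} [Zero M] (φ : F → M) :
    Function.extend (pt F) φ 0 (infty F) = 0 :=
  Function.extend_apply' _ _ _ fun ⟨x, hx⟩ => pt_ne_infty x hx

lemma extend_pt_pt {M : Type*} [Zero M] (φ : F → M) (x : F) :
    Function.extend (pt F) φ 0 (pt F x) = φ x :=
  pt_injective.extend_apply _ _ _

lemma eq_extend_pt_add_const {k : Type*} [Field k] (f : ℙ F (Fin 2 → F) → k) :
    f = Function.extend (pt F) (fun x => f (pt F x) - f (infty F)) 0 + f (infty F) • 1 := by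
  ext P
  induction P using ind with
  | infty => simp [extend_pt_infty]
  | pt x => simp [extend_pt_pt]

section Action

variable {F : Type} [Field F]

variable (F) in
def affineGL (s t : F) (hs : s ≠ 0) : GL (Fin 2) F :=
  .mkOfDetNeZero !![s, t; 0, 1] (by simpa [det_fin_two] using hs)

lemma projAct_affineGL_pt {s : F} (t : F) (hs : s ≠ 0) (x : F) :
    projAct F (affineGL F s t hs) (pt F x) = pt F (s * x + t) := by
  rw [pt, projAct, Projectivization.map_mk, pt, Projectivization.mk_eq_mk_iff']
  exact ⟨1, by ext i; fin_cases i <;> simp [affineGL, mulVec, dotProduct]⟩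

lemma projAct_affineGL_infty {s : F} (t : F) (hs : s ≠ 0) :
    projAct F (affineGL F s t hs) (infty F) = infty F := by
  rw [infty, projAct, Projectivization.map_mk, Projectivization.mk_eq_mk_iff']
  exact ⟨s, by ext i; fin_cases i <;> simp [affineGL, mulVec, dotProduct]⟩

lemma projAct_bijective (g : GL (Fin 2) F) : (projAct F g).Bijective :=
  MulAction.bijective (Matrix.GeneralLinearGroup.toLin g)

lemma extend_pt_comp_projAct_affineGL {M : Type*} [Zero M] {s : F} (t : F) (hs : s ≠ 0)
    (φ : F → M) :
    (fun P => Function.extend (pt F) φ 0 (projAct F (affineGL F s t hs) P)) =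
      Function.extend (pt F) (fun x => φ (s * x + t)) 0 := by
  ext P
  induction P using ind with
  | infty => simp only [projAct_affineGL_infty, extend_pt_infty]
  | pt x => simp only [projAct_affineGL_pt, extend_pt_pt]

end Action

end ProjectiveLine

open ProjectiveLine

section Simplicity

variable {F : Type} [Field F] [Fintype F] [Fintype (ℙ F (Fin 2 → F))] {k : Type*} [Field k]

lemma sub_infty_mem_augmentation (hq : (Fintype.card F : k) + 1 = 0)
    {f : ℙ F (Fin 2 → F) → k} (hf : f ∈ augmentation k _) :
    (fun x => f (pt F x) - f (infty F)) ∈ augmentation k F := by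
  rw [mem_augmentation, sum_eq_infty_add_sum_pt] at hf
  rw [mem_augmentation, Finset.sum_sub_distrib, Finset.sum_const, Finset.card_univ, nsmul_eq_mul]
  linear_combination hf - f (infty F) * hq

theorem eq_span_one_or_eq_augmentation {ψ : AddChar F k} (hψ : ψ.IsPrimitive)
    (hq : (Fintype.card F : k) + 1 = 0) {U : Submodule k (ℙ F (Fin 2 → F) → k)}
    (hinv : ∀ g : GL (Fin 2) F, ∀ f ∈ U, (fun x => f (projAct F g x)) ∈ U)
    (hconst : Submodule.span k {1} ≤ U) (hUW : U ≤ augmentation k _) :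
    U = Submodule.span k {1} ∨ U = augmentation k _ := by
  by_cases hle : U ≤ Submodule.span k {1}
  · exact .inl (le_antisymm hle hconst)
  refine .inr (le_antisymm hUW ?_)
  obtain ⟨f, hfU, hf⟩ := SetLike.not_le_iff_exists.mp hle
  let S := U.comap (Function.ExtendByZero.linearMap k (pt F))
  have hS : ∀ s t, s ≠ 0 → ∀ φ ∈ S, (fun x => φ (s * x + t)) ∈ S := fun s t hs φ hφ => by
    show Function.extend (pt F) (fun x => φ (s * x + t)) 0 ∈ U
    rw [← extend_pt_comp_projAct_affineGL t hs]
    exact hinv (affineGL F s t hs) _ hφ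
  have hmem : ∀ f, (fun x => f (pt F x) - f (infty F)) ∈ S ↔ f ∈ U := fun f => by
    show Function.extend (pt F) (fun x => f (pt F x) - f (infty F)) 0 ∈ U ↔ f ∈ U
    conv_rhs => rw [eq_extend_pt_add_const f]
    exact (U.add_mem_iff_left (U.smul_mem _ (hconst (Submodule.mem_span_singleton_self 1)))).symm
  have hf0 : (fun x => f (pt F x) - f (infty F)) ≠ 0 := fun h => by
    rw [eq_extend_pt_add_const f, h, Function.extend_zero, zero_add] at hf
    exact hf (Submodule.smul_mem _ _ (Submodule.mem_span_singleton_self 1))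
  have hq0 : (Fintype.card F : k) ≠ 0 := fun h => by simp [h] at hq
  have hSW := augmentation_le_of_affine_invariant hψ hq0 hS ((hmem f).2 hfU)
    (sub_infty_mem_augmentation hq (hUW hfU)) hf0
  exact fun f hf => (hmem f).1 (hSW (sub_infty_mem_augmentation hq hf))

end Simplicity

theorem permutation_module_augmentation_quotient_simple_general
    (k : Type) [Field k] [IsAlgClosed k] (hchar : ringChar k = 2)
    (q : ℕ) (hodd : Odd q)
    (F : Type) [Field F] [Fintype F] (hF : Fintype.card F = q)
    (V₁ W : Submodule k (ℙ F (Fin 2 → F) → k))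
    (hV₁ : V₁ = Submodule.span k {fun _ => (1 : k)})
    (hW : ∀ f : ℙ F (Fin 2 → F) → k, f ∈ W ↔ ∑ᶠ x, f x = 0) :
    Module.finrank k (ℙ F (Fin 2 → F) → k) = q + 1 ∧
    Module.finrank k V₁ = 1 ∧
    (∀ g : GL (Fin 2) F, ∀ f ∈ V₁, (fun x => f (projAct F g x)) ∈ V₁) ∧
    (∀ g : GL (Fin 2) F, ∀ f ∈ W, (fun x => f (projAct F g x)) ∈ W) ∧
    V₁ ≤ W ∧ V₁ ≠ W ∧
    Module.finrank k (W ⧸ V₁.comap W.subtype) = q - 1 ∧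
    (∀ U : Submodule k (ℙ F (Fin 2 → F) → k),
      (∀ g : GL (Fin 2) F, ∀ f ∈ U, (fun x => f (projAct F g x)) ∈ U) →
      V₁ ≤ U → U ≤ W → U = V₁ ∨ U = W) := by
  let : Fintype (ℙ F (Fin 2 → F)) := .ofEquiv _ (optionEquiv F)
  have hcard : Fintype.card (ℙ F (Fin 2 → F)) = q + 1 := by
    rw [← Fintype.card_congr (optionEquiv F), Fintype.card_option, hF]
  have hq : ((q + 1 : ℕ) : k) = 0 :=
    have : CharP k 2 := ringChar.eq_iff.mp hchar
    natCast_eq_zero_of_even_of_two_eq_zero hodd.add_one CharTwo.two_eq_zero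
  obtain ⟨ψ, hψ⟩ :=
    exists_isPrimitive_addChar F k (ringChar_ne_ringChar_of_odd_card hchar (hF ▸ hodd))
  obtain rfl : W = augmentation k _ := by
    ext f
    rw [hW, finsum_eq_sum_of_fintype, mem_augmentation]
  obtain rfl : V₁ = Submodule.span k {1} := hV₁
  refine ⟨by rw [Module.finrank_fintype_fun_eq_card, hcard], finrank_span_singleton one_ne_zero,
    fun g f hf => comp_mem_span_one hf _,
    fun g f hf => comp_mem_augmentation (projAct_bijective g) hf,
    span_one_le_augmentation (by rwa [hcard]), span_one_ne_augmentation ?_, ?_,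
    fun U hU h₁ h₂ => eq_span_one_or_eq_augmentation hψ (by rwa [hF, ← Nat.cast_add_one]) hU h₁ h₂⟩
  · have := Fintype.one_lt_card (α := F)
    omega
  · rw [finrank_augmentation_quotient_span_one (by rwa [hcard]), hcard]
    omega

/-- Let `k` be algebraically closed of characteristic `2`, `q` an odd prime
power, and `V = k[ℙ¹(F_q)]` the permutation module for `PGL₂(F_q)` of dimension `q+1`.  Then
`V₁ = k·(sum of all basis vectors)` (realized as the constant functions inside `V = (ℙ¹ → k)`)
is a `1`-dimensional invariant submodule, `V₁` is contained in the augmentation submodule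
`W = {f | ∑ f = 0}` (since `q+1` is even), and `W/V₁` is a simple module of dimension `q-1`:
it is nonzero and there is no invariant subspace strictly between `V₁` and `W`. -/
theorem permutation_module_augmentation_quotient_simple
    (k : Type) [Field k] [IsAlgClosed k] (hchar : ringChar k = 2)
    (q : ℕ) (hq : IsPrimePow q) (hodd : Odd q)
    (F : Type) [Field F] [Fintype F] (hF : Fintype.card F = q)
    (V₁ W : Submodule k (ℙ F (Fin 2 → F) → k))
    (hV₁ : V₁ = Submodule.span k {fun _ => (1 : k)})
    (hW : ∀ f : ℙ F (Fin 2 → F) → k, f ∈ W ↔ ∑ᶠ x, f x = 0) :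
    Module.finrank k (ℙ F (Fin 2 → F) → k) = q + 1 ∧
    Module.finrank k V₁ = 1 ∧
    (∀ g : GL (Fin 2) F, ∀ f ∈ V₁, (fun x => f (projAct F g x)) ∈ V₁) ∧
    (∀ g : GL (Fin 2) F, ∀ f ∈ W, (fun x => f (projAct F g x)) ∈ W) ∧
    V₁ ≤ W ∧ V₁ ≠ W ∧
    Module.finrank k (W ⧸ V₁.comap W.subtype) = q - 1 ∧
    (∀ U : Submodule k (ℙ F (Fin 2 → F) → k),
      (∀ g : GL (Fin 2) F, ∀ f ∈ U, (fun x => f (projAct F g x)) ∈ U) →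
      V₁ ≤ U → U ≤ W → U = V₁ ∨ U = W) :=
  permutation_module_augmentation_quotient_simple_general k hchar q hodd F hF V₁ W hV₁ hW
end

section
/- Let q be a prime power with q ≡ 3 (mod 4) and let 2^(m-2) be the largest power of 2 dividing q+1, so m ≥ 4. In a Sylow 2-subgroup P ≅ SD_{2^m} = ⟨x,t⟩ of G = GL_2(F_q), the elements x^{2^{m-3}} and tx (both of order 4, generating a quaternion subgroup Q of order 8) are conjugate in G but not conjugate by any element of N_P(Q). -/
/-!
The eigenvalues of `x` are `ξ` and `ξ ^ q`, whose product is `ξ ^ (q + 1) = -1` and whose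
`2 ^ (m - 2)`-th powers are both `-1`; hence `x ^ 2 ^ (m - 2) = -1`. Together with `t² = 1` and
`(t x)² = -1`, read off from the matrices, this shows that `u = x ^ 2 ^ (m - 3)` and `v = t x` both
square to `-1` and that `v` inverts `u`: the defining relations of the quaternion group.
Since `-1` is not a square in `F_q` (`q ≡ 3 mod 4`), every `w ∈ GL₂(F_q)` with `w² = -1` is
conjugate to the quarter turn, so `u` and `v` are conjugate in `G`. On the other hand `x`
centralises `u` and `t` inverts it, so all of `P` normalises `⟨u⟩`, while `v ∉ ⟨u⟩`.
-/

open Matrix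

section QuaternionPresentation

variable {G : Type*} [Group G] {u v : G}

lemma zpow_val_eq_zpow_of_cast_eq {n : ℕ} [NeZero n] (hu : u ^ n = 1) {i : ZMod n} {k : ℤ}
    (hk : (k : ZMod n) = i) : u ^ (i.val : ℤ) = u ^ k := by
  rw [zpow_eq_zpow_iff_modEq]
  refine Int.ModEq.of_dvd (Int.natCast_dvd_natCast.mpr (orderOf_dvd_of_pow_eq_one hu)) ?_
  rw [← ZMod.intCast_eq_intCast_iff, ← hk]
  simp

lemma notMem_zpowers_of_conj_eq_inv (hu : orderOf u = 4) (hvu : v * u * v⁻¹ = u⁻¹) :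
    v ∉ Subgroup.zpowers u := by
  rintro ⟨k, rfl⟩
  have hinv : u = u⁻¹ := by rw [← hvu]; group
  have := orderOf_le_of_pow_eq_one two_pos
    (show u ^ 2 = 1 by rw [pow_two, mul_eq_one_iff_eq_inv, ← hinv])
  omega

lemma zpow_mul_eq_mul_zpow_neg (hvu : v * u * v⁻¹ = u⁻¹) (k : ℤ) :
    u ^ k * v = v * u ^ (-k) := by
  have : v * u ^ (-k) * v⁻¹ = u ^ k := by rw [← conj_zpow, hvu, inv_zpow' u, neg_neg]
  rw [← this, inv_mul_cancel_right]

def quaternionGroupHom (hu : u ^ 4 = 1) (hvv : v ^ 2 = u ^ 2) (hvu : v * u * v⁻¹ = u⁻¹) :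
    QuaternionGroup 2 →* G :=
  MonoidHom.mk' (fun | .a i => u ^ (i.val : ℤ) | .xa i => v * u ^ (i.val : ℤ)) <| by
    rintro (i | i) (j | j)
    · show u ^ ((i + j).val : ℤ) = _
      rw [zpow_val_eq_zpow_of_cast_eq hu (k := i.val + j.val) (by push_cast; simp), zpow_add u]
    · show v * u ^ ((j - i).val : ℤ) = u ^ (i.val : ℤ) * (v * u ^ (j.val : ℤ))
      rw [zpow_val_eq_zpow_of_cast_eq hu (k := j.val - i.val) (by push_cast; simp),
        ← mul_assoc, zpow_mul_eq_mul_zpow_neg hvu]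
      group
    · show v * u ^ ((i + j).val : ℤ) = _
      rw [zpow_val_eq_zpow_of_cast_eq hu (k := i.val + j.val) (by push_cast; simp), zpow_add u,
        mul_assoc]
    · show u ^ ((2 + j - i : ZMod (2 * 2)).val : ℤ) =
        v * u ^ (i.val : ℤ) * (v * u ^ (j.val : ℤ))
      rw [zpow_val_eq_zpow_of_cast_eq hu (k := 2 + j.val - i.val) (by push_cast; simp),
        show v * u ^ (i.val : ℤ) * (v * u ^ (j.val : ℤ)) =
          v * (u ^ (i.val : ℤ) * v) * u ^ (j.val : ℤ) by group,
        zpow_mul_eq_mul_zpow_neg hvu, ← mul_assoc, ← sq v, hvv]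
      group

lemma nonempty_closure_mulEquiv_quaternionGroup (hu : orderOf u = 4) (hvv : v ^ 2 = u ^ 2)
    (hvu : v * u * v⁻¹ = u⁻¹) :
    Nonempty (Subgroup.closure {u, v} ≃* QuaternionGroup 2) := by
  set f := quaternionGroupHom (hu ▸ pow_orderOf_eq_one u) hvv hvu
  have hinj : Function.Injective f := by
    rw [injective_iff_map_eq_one]
    rintro (i | i) h
    · have h4 : (4 : ℤ) ∣ i.val := by
        exact_mod_cast hu ▸ orderOf_dvd_iff_zpow_eq_one.mpr h
      have : i.val < 4 := ZMod.val_lt i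
      rw [QuaternionGroup.one_def, (ZMod.val_eq_zero i).mp (by omega)]
    · refine absurd ⟨-(i.val : ℤ), ?_⟩ (notMem_zpowers_of_conj_eq_inv hu hvu)
      exact (zpow_neg u _).trans (eq_inv_of_mul_eq_one_left h).symm
  have hrange : f.range = Subgroup.closure {u, v} := by
    apply le_antisymm
    · rintro _ ⟨i | i, rfl⟩
      · exact zpow_mem (Subgroup.subset_closure (Set.mem_insert u _)) _
      · exact mul_mem (Subgroup.subset_closure (Set.mem_insert_of_mem u rfl))
          (zpow_mem (Subgroup.subset_closure (Set.mem_insert u _)) _)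
    · rw [Subgroup.closure_le, Set.insert_subset_iff, Set.singleton_subset_iff]
      exact ⟨⟨.a 1, zpow_one u⟩, ⟨.xa 0, by simp [f, quaternionGroupHom]⟩⟩
  exact ⟨((MonoidHom.ofInjective hinj).trans (MulEquiv.subgroupCongr hrange)).symm⟩

lemma mem_normalizer_zpowers_of_zpowers_conj_eq {g : G}
    (h : Subgroup.zpowers (g * u * g⁻¹) = Subgroup.zpowers u) :
    g ∈ Subgroup.normalizer (Subgroup.zpowers u : Set G) := by
  rw [Subgroup.mem_normalizer_iff_map_conj_eq, MonoidHom.map_zpowers]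
  exact h

lemma closure_pair_le_normalizer_zpowers {x t : G} (hx : Commute x u)
    (ht : t * u * t⁻¹ = u⁻¹) :
    Subgroup.closure {x, t} ≤ Subgroup.normalizer (Subgroup.zpowers u : Set G) := by
  rw [Subgroup.closure_le, Set.insert_subset_iff, Set.singleton_subset_iff]
  exact ⟨mem_normalizer_zpowers_of_zpowers_conj_eq (by rw [hx.eq, mul_inv_cancel_right]),
    mem_normalizer_zpowers_of_zpowers_conj_eq (by rw [ht, Subgroup.zpowers_inv])⟩

end QuaternionPresentation

section NegOne

variable {G : Type*} [Group G] [HasDistribNeg G]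

lemma orderOf_eq_four_of_sq_eq_neg_one (h : (-1 : G) ≠ 1) {w : G} (hw : w ^ 2 = -1) :
    orderOf w = 4 :=
  orderOf_eq_prime_pow (p := 2) (n := 1) (by rwa [pow_one, hw])
    (by rw [pow_succ, pow_mul, pow_one, hw]; simp)

lemma conj_pow_eq_inv_of_even {x t : G} (htt : t * t = 1) (htx : (t * x) ^ 2 = -1) {n : ℕ}
    (hn : Even n) : t * x ^ n * t⁻¹ = (x ^ n)⁻¹ := by
  have hconj : t * x * t⁻¹ = -x⁻¹ := by
    have h : t * x * t * x = -1 := by rw [← htx, sq, ← mul_assoc]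
    rw [inv_eq_of_mul_eq_one_right htt, eq_mul_inv_of_mul_eq h, neg_one_mul]
  rw [← conj_pow, hconj, hn.neg_pow, inv_pow]

end NegOne

namespace Matrix.GeneralLinearGroup

variable {F : Type*} [Field F]

lemma neg_one_ne_one_of_not_isSquare (hF : ¬ IsSquare (-1 : F)) : (-1 : GL (Fin 2) F) ≠ 1 := by
  intro h
  have h00 : (-1 : F) = 1 := by
    simpa using congrArg (fun g : GL (Fin 2) F => (g : Matrix (Fin 2) (Fin 2) F) 0 0) h
  exact hF ⟨1, by rw [h00, mul_one]⟩

lemma mul_self_eq_one_of_val_eq {t : GL (Fin 2) F} {a : F} (ht : t.1 = !![1, a; 0, -1]) :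
    t * t = 1 := Units.ext <| by
  rw [Units.val_mul, ht, Units.val_one]
  ext i j
  fin_cases i <;> fin_cases j <;> simp [mul_apply, Fin.sum_univ_succ]

lemma mul_sq_eq_neg_one_of_val_eq {x t : GL (Fin 2) F} {a : F} (hx : x.1 = !![0, 1; 1, a])
    (ht : t.1 = !![1, a; 0, -1]) : (t * x) ^ 2 = -1 := Units.ext <| by
  rw [sq, Units.val_mul, Units.val_mul, ht, hx, Units.val_neg, Units.val_one]
  ext i j
  fin_cases i <;> fin_cases j <;> simp [mul_apply, Fin.sum_univ_succ]; ring

def quarterTurn : GL (Fin 2) F := mkOfDetNeZero !![0, -1; 1, 0] (by simp)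

/- In the basis `e₀, w e₀` the element `w` acts as the quarter turn; `e₀` is not an
eigenvector because an eigenvalue would be a square root of `-1`. -/
lemma isConj_quarterTurn_of_sq_eq_neg_one (hF : ¬ IsSquare (-1 : F)) {w : GL (Fin 2) F}
    (hw : w ^ 2 = -1) : IsConj w quarterTurn := by
  have hsq : (w : Matrix (Fin 2) (Fin 2) F) * w = -1 := by
    rw [← Units.val_mul, ← sq, hw, Units.val_neg, Units.val_one]
  rw [eta_fin_two (w : Matrix (Fin 2) (Fin 2) F), mul_fin_two] at hsq
  have e00 : w.1 0 0 * w.1 0 0 + w.1 0 1 * w.1 1 0 = -1 := by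
    simpa using congrFun (congrFun hsq 0) 0
  have e10 : w.1 1 0 * w.1 0 0 + w.1 1 1 * w.1 1 0 = 0 := by
    simpa using congrFun (congrFun hsq 1) 0
  have hs : w.1 1 0 ≠ 0 := fun h0 => hF ⟨w.1 0 0, by rw [← e00, h0]; ring⟩
  let S : GL (Fin 2) F := mkOfDetNeZero !![1, w.1 0 0; 0, w.1 1 0] (by simpa)
  have hS : w * S = S * quarterTurn := by
    ext i j
    fin_cases i <;> fin_cases j <;> simp [S, quarterTurn, mul_apply, Fin.sum_univ_succ, e00, e10]
  exact isConj_iff.mpr ⟨S⁻¹, by rw [inv_inv, mul_assoc, hS, inv_mul_cancel_left]⟩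

lemma isConj_of_sq_eq_neg_one (hF : ¬ IsSquare (-1 : F)) {w w' : GL (Fin 2) F}
    (hw : w ^ 2 = -1) (hw' : w' ^ 2 = -1) : IsConj w w' :=
  (isConj_quarterTurn_of_sq_eq_neg_one hF hw).trans
    (isConj_quarterTurn_of_sq_eq_neg_one hF hw').symm

end Matrix.GeneralLinearGroup

lemma pow_eq_neg_one_of_orderOf_dvd_two_mul {R : Type*} [Ring R] [NoZeroDivisors R] {ξ : R}
    {n : ℕ} (h2 : orderOf ξ ∣ 2 * n) (h1 : ¬ orderOf ξ ∣ n) : ξ ^ n = -1 := by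
  have hsq : ξ ^ n * ξ ^ n = 1 := by
    rwa [← pow_add, ← two_mul, ← orderOf_dvd_iff_pow_eq_one]
  exact (mul_self_eq_one_iff.mp hsq).resolve_left (mt orderOf_dvd_of_pow_eq_one h1)

/- `!![0, 1; -(r * s), r + s]` is the companion matrix of `(X - r) (X - s)`, diagonalised by the
Vandermonde matrix `!![1, 1; r, s]`. -/
lemma companion_pow_eq_smul_one {K : Type*} [Field K] {r s c : K} (hrs : r ≠ s) {N : ℕ}
    (hr : r ^ N = c) (hs : s ^ N = c) :
    !![0, 1; -(r * s), r + s] ^ N = c • (1 : Matrix (Fin 2) (Fin 2) K) := by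
  let S : Matrix (Fin 2) (Fin 2) K := !![1, 1; r, s]
  have hS : IsUnit S :=
    (isUnit_iff_isUnit_det S).mpr (by simpa [S, sub_eq_zero, eq_comm] using hrs)
  have hdiag : SemiconjBy S (diagonal ![r, s]) !![0, 1; -(r * s), r + s] := by
    ext i j
    fin_cases i <;> fin_cases j <;> simp [S, mul_apply, Fin.sum_univ_succ] <;> ring
  apply hS.mul_right_cancel
  rw [← (hdiag.pow_right N).eq, diagonal_pow]
  ext i j
  fin_cases i <;> fin_cases j <;>
    simp [S, mul_apply, Fin.sum_univ_succ, one_fin_two, hr, hs, mul_comm]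

lemma companion_pow_eq_neg_one_of_algebraMap_eq {F K : Type*} [Field F] [Field K] [Algebra F K]
    {a : F} {r s : K} (hrs : r ≠ s) (hprod : r * s = -1) (ha : algebraMap F K a = r + s) {N : ℕ}
    (hr : r ^ N = -1) (hs : s ^ N = -1) :
    !![0, 1; 1, a] ^ N = (-1 : Matrix (Fin 2) (Fin 2) F) := by
  apply (map_injective (algebraMap F K).injective).eq_iff.mp
  have hmap : (!![0, 1; 1, a] : Matrix (Fin 2) (Fin 2) F).map (algebraMap F K) =
      !![0, 1; -(r * s), r + s] := by
    rw [hprod, neg_neg, ← ha]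
    ext i j
    fin_cases i <;> fin_cases j <;> simp
  change (algebraMap F K).mapMatrix (_ ^ N) = (algebraMap F K).mapMatrix (-1)
  rw [map_pow, map_neg, map_one, RingHom.mapMatrix_apply, hmap,
    companion_pow_eq_smul_one hrs hr hs, neg_one_smul]

lemma companion_pow_two_pow_eq_neg_one {F K : Type*} [Field F] [Field K] [Algebra F K] {q m : ℕ}
    (hq : Odd q) (hm : 4 ≤ m) (hdvd : 2 ^ (m - 2) ∣ q + 1) (hndvd : ¬ 2 ^ (m - 1) ∣ q + 1)
    {ξ : K} (hξ : orderOf ξ = 2 ^ (m - 1)) {a : F} (ha : algebraMap F K a = ξ + ξ ^ q) :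
    !![0, 1; 1, a] ^ 2 ^ (m - 2) = (-1 : Matrix (Fin 2) (Fin 2) F) := by
  have h2m : 2 ^ (m - 1) = 2 * 2 ^ (m - 2) := by rw [← pow_succ']; congr 1; omega
  have hξN : ξ ^ 2 ^ (m - 2) = -1 := by
    refine pow_eq_neg_one_of_orderOf_dvd_two_mul (by rw [hξ, h2m]) fun h => ?_
    rw [hξ, h2m] at h
    have := Nat.le_of_dvd (by positivity) h
    have : 0 < 2 ^ (m - 2) := by positivity
    omega
  have hξq : ξ ^ (q + 1) = -1 :=
    pow_eq_neg_one_of_orderOf_dvd_two_mul (by rw [hξ, h2m]; exact mul_dvd_mul_left 2 hdvd)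
      (hξ ▸ hndvd)
  have hne : ξ ≠ ξ ^ q := by
    intro h
    have hsq : ξ ^ 2 = -1 := by rw [← hξq, pow_succ ξ q, ← h, sq]
    have h4 : ξ ^ 2 ^ 2 = 1 := by
      rw [show 2 ^ 2 = 2 * 2 by rfl, pow_mul, hsq]
      norm_num
    have := (Nat.pow_dvd_pow_iff_le_right (by norm_num)).mp (hξ ▸ orderOf_dvd_of_pow_eq_one h4)
    omega
  refine companion_pow_eq_neg_one_of_algebraMap_eq hne (by rwa [← pow_succ']) ha hξN ?_
  rw [← pow_mul, mul_comm, pow_mul, hξN, hq.neg_one_pow]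

theorem quaternion_generators_conjugate_in_G_not_in_P_general
    (q m : ℕ) (hq3 : q % 4 = 3) (hm : 4 ≤ m)
    (hdvd : 2 ^ (m - 2) ∣ q + 1) (hndvd : ¬ 2 ^ (m - 1) ∣ q + 1)
    (F K : Type) [Field F] [Field K] [Fintype F] [Algebra F K]
    (hF : Fintype.card F = q)
    (ξ : K) (hξ : orderOf ξ = 2 ^ (m - 1))
    (a : F) (ha : algebraMap F K a = ξ + ξ ^ q)
    (x t : GL (Fin 2) F)
    (hx : (x : Matrix (Fin 2) (Fin 2) F) = !![0, 1; 1, a])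
    (ht : (t : Matrix (Fin 2) (Fin 2) F) = !![1, a; 0, -1])
    (P : Subgroup (GL (Fin 2) F)) (hP : P = Subgroup.closure {x, t})
    (Q : Subgroup (GL (Fin 2) F))
    (hQ : Q = Subgroup.closure {x ^ (2 ^ (m - 3)), t * x}) :
    orderOf (x ^ (2 ^ (m - 3))) = 4 ∧ orderOf (t * x) = 4 ∧
    Nat.card Q = 8 ∧ Nonempty (Q ≃* QuaternionGroup 2) ∧
    IsConj (x ^ (2 ^ (m - 3))) (t * x) ∧
    ¬ ∃ g ∈ P ⊓ Subgroup.normalizer (Q : Set (GL (Fin 2) F)), g * x ^ (2 ^ (m - 3)) * g⁻¹ = t * x := by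
  open GeneralLinearGroup in
  subst hP hQ
  have hns : ¬ IsSquare (-1 : F) := by rw [FiniteField.isSquare_neg_one_iff, hF]; omega
  have hxN : x ^ 2 ^ (m - 2) = -1 := Units.ext <| by
    rw [Units.val_pow_eq_pow_val, hx, Units.val_neg, Units.val_one,
      companion_pow_two_pow_eq_neg_one (Nat.odd_iff.mpr (by omega)) hm hdvd hndvd hξ ha]
  have htx := mul_sq_eq_neg_one_of_val_eq hx ht
  have hu : (x ^ 2 ^ (m - 3)) ^ 2 = -1 := by
    rw [← pow_mul, ← pow_succ, show m - 3 + 1 = m - 2 by omega, hxN]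
  have htu : t * x ^ 2 ^ (m - 3) * t⁻¹ = (x ^ 2 ^ (m - 3))⁻¹ :=
    conj_pow_eq_inv_of_even (mul_self_eq_one_of_val_eq ht) htx
      (Nat.even_pow.mpr ⟨even_two, by omega⟩)
  have hvu : t * x * x ^ 2 ^ (m - 3) * (t * x)⁻¹ = (x ^ 2 ^ (m - 3))⁻¹ := by
    rw [← htu]; group
  have hou := orderOf_eq_four_of_sq_eq_neg_one (neg_one_ne_one_of_not_isSquare hns) hu
  obtain ⟨e⟩ := nonempty_closure_mulEquiv_quaternionGroup hou (htx.trans hu.symm) hvu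
  refine ⟨hou, orderOf_eq_four_of_sq_eq_neg_one (neg_one_ne_one_of_not_isSquare hns) htx, ?_,
    ⟨e⟩, isConj_of_sq_eq_neg_one hns hu htx, ?_⟩
  · rw [Nat.card_congr e.toEquiv, Nat.card_eq_fintype_card, QuaternionGroup.card]
  · rintro ⟨g, ⟨hgP, -⟩, hconj⟩
    have hgN := closure_pair_le_normalizer_zpowers (Commute.self_pow x _) htu hgP
    exact notMem_zpowers_of_conj_eq_inv hou hvu
      (hconj ▸ (Subgroup.mem_normalizer_iff.mp hgN _).mp (Subgroup.mem_zpowers _))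

/-- Let `q ≡ 3 (mod 4)` be a prime power, `2^(m-2)` the exact power of `2`
dividing `q+1` (so `m ≥ 4`), and let `P = ⟨x, t⟩ ≅ SD_{2^m}` be a Sylow `2`-subgroup of
`G = GL₂(F_q)`, where `x = [[0,1],[1,a]]`, `t = [[1,a],[0,-1]]`, `a = ξ + ξ^q` for `ξ` a
primitive `2^(m-1)`-th root of unity in `F_{q^2}`.  Then `x^(2^(m-3))` and `t*x` both have
order `4` and generate a quaternion subgroup `Q` of order `8`; they are conjugate in `G`,
but not conjugate by any element of `N_P(Q)`. -/
theorem quaternion_generators_conjugate_in_G_not_in_P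
    (q m : ℕ) (hq : IsPrimePow q) (hq3 : q % 4 = 3) (hm : 4 ≤ m)
    (hdvd : 2 ^ (m - 2) ∣ q + 1) (hndvd : ¬ 2 ^ (m - 1) ∣ q + 1)
    (F K : Type) [Field F] [Field K] [Fintype F] [Fintype K] [Algebra F K]
    (hF : Fintype.card F = q) (hK : Fintype.card K = q ^ 2)
    (ξ : K) (hξ : orderOf ξ = 2 ^ (m - 1))
    (a : F) (ha : algebraMap F K a = ξ + ξ ^ q)
    (x t : GL (Fin 2) F)
    (hx : (x : Matrix (Fin 2) (Fin 2) F) = !![0, 1; 1, a])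
    (ht : (t : Matrix (Fin 2) (Fin 2) F) = !![1, a; 0, -1])
    (P : Subgroup (GL (Fin 2) F)) (hP : P = Subgroup.closure {x, t})
    (hSyl : ∃ S : Sylow 2 (GL (Fin 2) F), (S : Subgroup (GL (Fin 2) F)) = P)
    (Q : Subgroup (GL (Fin 2) F))
    (hQ : Q = Subgroup.closure {x ^ (2 ^ (m - 3)), t * x}) :
    orderOf (x ^ (2 ^ (m - 3))) = 4 ∧ orderOf (t * x) = 4 ∧
    Nat.card Q = 8 ∧ Nonempty (Q ≃* QuaternionGroup 2) ∧
    IsConj (x ^ (2 ^ (m - 3))) (t * x) ∧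
    ¬ ∃ g ∈ P ⊓ Subgroup.normalizer (Q : Set (GL (Fin 2) F)), g * x ^ (2 ^ (m - 3)) * g⁻¹ = t * x :=
  quaternion_generators_conjugate_in_G_not_in_P_general q m hq3 hm hdvd hndvd F K hF ξ hξ a ha x t
    hx ht P hP Q hQ
end
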